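/- Let a, b, a', b', n ∈ ℕ with a + b ≤ n and a' + b' ≤ a + b, let ε > 0, and let U be an (a,b)-block-diagonal 2^n × 2^n unitary. Suppose 𝒲_{a',b'} ⊆ supp(U) and 4^{−n} · Σ_{x ∈ 𝒲_{a',b'}} |tr(W_x·U)|² ≥ 1 − ε²/2^{a+b}. Then ∥Π_{𝒲_{a',b'}}(U) − U∥_op ≤ ε. -/

import Mathlib

open scoped Kronecker Classical Matrix

namespace PauliSpec

/-- The field 𝔽₂. -/
abbrev F2 := ZMod 2

/-- The phase space 𝔽₂^{2n}, identified with pairs `(xX, xZ) ∈ 𝔽₂^n × 𝔽₂^n`. -/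
abbrev PhS (n : ℕ) := (Fin n → F2) × (Fin n → F2)

/-- Index type for `n`-qubit matrices: ℂ^{2^n} ≅ ⊗_{j=1}^n ℂ². -/
abbrev QIdx (n : ℕ) := Fin n → Fin 2

/-- The 2×2 Pauli X matrix. -/
def PauliX : Matrix (Fin 2) (Fin 2) ℂ := !![0, 1; 1, 0]

/-- The 2×2 Pauli Y matrix. -/
def PauliY : Matrix (Fin 2) (Fin 2) ℂ := !![0, -Complex.I; Complex.I, 0]

/-- The 2×2 Pauli Z matrix. -/
def PauliZ : Matrix (Fin 2) (Fin 2) ℂ := !![1, 0; 0, -1]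

/-- The Weyl operator `W_x := i^{xX·xZ} ⊗_j (X^{xX_j} Z^{xZ_j})`, written entrywise:
the `(u, v)` entry of the `n`-fold Kronecker product of matrices `M_j` is `∏_j (M_j)_{u_j v_j}`. -/
noncomputable def Weyl {n : ℕ} (x : PhS n) : Matrix (QIdx n) (QIdx n) ℂ :=
  fun u v =>
    (Complex.I ^ (∑ j, (x.1 j).val * (x.2 j).val)) *
      ∏ j, (PauliX ^ (x.1 j).val * PauliZ ^ (x.2 j).val) (u j) (v j)

/-- The symplectic product `[x,y] := ∑_j (xX_j·yZ_j + xZ_j·yX_j) ∈ 𝔽₂`. -/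
def sympl {n : ℕ} (x y : PhS n) : F2 :=
  ∑ j, (x.1 j * y.2 j + x.2 j * y.1 j)

lemma sympl_add_left {n : ℕ} (x y z : PhS n) :
    sympl (x + y) z = sympl x z + sympl y z := by
  simp only [sympl, Prod.fst_add, Prod.snd_add, Pi.add_apply, add_mul]
  rw [← Finset.sum_add_distrib]
  exact Finset.sum_congr rfl fun j _ => by ring

lemma sympl_smul_left {n : ℕ} (c : F2) (x z : PhS n) :
    sympl (c • x) z = c * sympl x z := by
  simp only [sympl, Prod.smul_fst, Prod.smul_snd, Pi.smul_apply, smul_eq_mul, Finset.mul_sum]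
  exact Finset.sum_congr rfl fun j _ => by ring

/-- The symplectic complement `S^⊥ := {x : [x,y] = 0 for all y ∈ S}`. -/
def symplComplement {n : ℕ} (S : Submodule F2 (PhS n)) : Submodule F2 (PhS n) where
  carrier := {x | ∀ y ∈ S, sympl x y = 0}
  add_mem' := by
    intro a b ha hb y hy
    rw [sympl_add_left, ha y hy, hb y hy, add_zero]
  zero_mem' := by
    intro y hy
    simp [sympl]
  smul_mem' := by
    intro c x hx y hy
    rw [sympl_smul_left, hx y hy, mul_zero]

/-- The Pauli support `supp(A) := {x : tr(W_x·A) ≠ 0}`. -/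
noncomputable def pauliSupport {n : ℕ} (A : Matrix (QIdx n) (QIdx n) ℂ) : Set (PhS n) :=
  {x | (Weyl x * A).trace ≠ 0}

/-- The Pauli projection `Π_S(A) := 2^{−n} ∑_{x∈S} tr(A·W_x)·W_x`. -/
noncomputable def pauliProj {n : ℕ} (S : Set (PhS n)) (A : Matrix (QIdx n) (QIdx n) ℂ) :
    Matrix (QIdx n) (QIdx n) ℂ :=
  (2 ^ n : ℂ)⁻¹ • ∑ᶠ x ∈ S, (A * Weyl x).trace • Weyl x

/-- The subspace `𝒲_{a,b} ⊆ 𝔽₂^{2n}`: `xX_j = 0` on the first `n−a` coordinates and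
`xZ_j = 0` on the first `n−a−b` coordinates. -/
def Wab (n a b : ℕ) : Submodule F2 (PhS n) where
  carrier := {x | (∀ j : Fin n, (j : ℕ) < n - a → x.1 j = 0) ∧
    ∀ j : Fin n, (j : ℕ) < n - a - b → x.2 j = 0}
  add_mem' := by
    rintro x y ⟨hx1, hx2⟩ ⟨hy1, hy2⟩
    refine ⟨fun j hj => ?_, fun j hj => ?_⟩
    · simp [Prod.fst_add, Pi.add_apply, hx1 j hj, hy1 j hj]
    · simp [Prod.snd_add, Pi.add_apply, hx2 j hj, hy2 j hj]
  zero_mem' := ⟨fun j _ => rfl, fun j _ => rfl⟩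
  smul_mem' := by
    rintro c x ⟨hx1, hx2⟩
    refine ⟨fun j hj => ?_, fun j hj => ?_⟩
    · simp [Prod.smul_fst, Pi.smul_apply, hx1 j hj]
    · simp [Prod.smul_snd, Pi.smul_apply, hx2 j hj]

/-- `A` is `(a,b)`-block-diagonal: under ℂ^{2^n} ≅ ℂ^{2^{n−a−b}} ⊗ ℂ^{2^b} ⊗ ℂ^{2^a},
`A = I ⊗ (∑_{y∈{0,1}^b} |y⟩⟨y| ⊗ A_y)`.  Entrywise: `A u v = 0` unless `u, v` agree on the
first `n−a` coordinates, and then the entry is `A_{u₂}(u₃, v₃)` where `u₂` is the middle `b`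
coordinates and `u₃, v₃` the last `a` coordinates. -/
def IsBlockDiag {n : ℕ} (a b : ℕ) (hab : a + b ≤ n)
    (A : Matrix (QIdx n) (QIdx n) ℂ) : Prop :=
  ∃ M : (Fin b → Fin 2) → Matrix (Fin a → Fin 2) (Fin a → Fin 2) ℂ,
    ∀ u v : QIdx n,
      A u v =
        if ∀ j : Fin n, (j : ℕ) < n - a → u j = v j then
          M (fun i => u ⟨n - a - b + i.1, by have := i.2; omega⟩)
            (fun i => u ⟨n - a + i.1, by have := i.2; omega⟩)
            (fun i => v ⟨n - a + i.1, by have := i.2; omega⟩)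
        else 0

/-- The ℓ² → ℓ² operator norm of a complex matrix. -/
noncomputable def l2OpNorm {ι κ : Type*} [Fintype ι] [Fintype κ] [DecidableEq κ]
    (A : Matrix ι κ ℂ) : ℝ :=
  ‖LinearMap.toContinuousLinearMap (Matrix.toEuclideanLin A)‖

/-- `C` is a Clifford unitary: it is unitary and conjugates every Weyl operator to a
signed Weyl operator. -/
def IsCliffordUnitary {n : ℕ} (C : Matrix (QIdx n) (QIdx n) ℂ) : Prop :=
  C ∈ Matrix.unitaryGroup (QIdx n) ℂ ∧
    ∀ x : PhS n, ∃ (y : PhS n) (s : ℂ), (s = 1 ∨ s = -1) ∧ C * Weyl x * Cᴴ = s • Weyl y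

/-- `C T C† := {y : ∃ x ∈ T, C·W_x·C† = ±W_y}`. -/
def conjSet {n : ℕ} (C : Matrix (QIdx n) (QIdx n) ℂ) (T : Set (PhS n)) : Set (PhS n) :=
  {y | ∃ x ∈ T, ∃ s : ℂ, (s = 1 ∨ s = -1) ∧ C * Weyl x * Cᴴ = s • Weyl y}

/-- The matrix acting as the 2×2 matrix `P` on qubit `i` and as the identity elsewhere:
`P_i := I^{⊗(i−1)} ⊗ P ⊗ I^{⊗(n−i)}`. -/
def onQubit {n : ℕ} (P : Matrix (Fin 2) (Fin 2) ℂ) (i : Fin n) :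
    Matrix (QIdx n) (QIdx n) ℂ :=
  fun u v => if ∀ j : Fin n, j ≠ i → u j = v j then P (u i) (v i) else 0

/-- The unitary on `2n` qubits exchanging the `i`-th qubit of the first group of `n`
qubits with the `i`-th qubit of the second group. -/
def swapQubit {n : ℕ} (i : Fin n) :
    Matrix (QIdx n × QIdx n) (QIdx n × QIdx n) ℂ :=
  fun p q =>
    if p.1 = Function.update q.1 i (q.2 i) ∧ p.2 = Function.update q.2 i (q.1 i) then 1 else 0

/-!
Write `m = n - a - b`. A block-diagonal `U` is `I_{2^m} ⊗ V`, so `tr(U W_x) = 0` unless `W_x`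
is the identity on the first `m` qubits; hence `D = Π_S(U) - U = -2^{-n} ∑_{x ∉ S} tr(U W_x) W_x`
is again of the form `I_{2^m} ⊗ B`. Orthogonality of the Weyl operators gives
`‖D‖_F² = 2^{-n} ∑_{x ∉ S} |tr(U W_x)|² = 2^{-n} (4^n - ∑_{x ∈ S} |tr(U W_x)|²) ≤ 2^m ε²`,
using `∑_x |tr(U W_x)|² = 2^n ‖U‖_F² = 4^n` for unitary `U`. Finally
`‖D‖_op = ‖B‖_op ≤ ‖B‖_F = 2^{-m/2} ‖D‖_F ≤ ε`.
-/

section PiKron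

variable {σ α : Type*} [Fintype σ]

def piKron (A : σ → Matrix α α ℂ) : Matrix (σ → α) (σ → α) ℂ :=
  Matrix.of fun u v => ∏ j, A j (u j) (v j)

@[simp]
lemma piKron_apply (A : σ → Matrix α α ℂ) (u v : σ → α) :
    piKron A u v = ∏ j, A j (u j) (v j) := rfl

lemma piKron_mul [DecidableEq σ] [Fintype α] (A B : σ → Matrix α α ℂ) :
    piKron A * piKron B = piKron (A * B) := by
  ext u v
  simp only [Matrix.mul_apply, piKron_apply, Pi.mul_apply, ← Finset.prod_mul_distrib]
  exact (Fintype.prod_sum fun j t => A j (u j) t * B j t (v j)).symm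

lemma conjTranspose_piKron (A : σ → Matrix α α ℂ) :
    (piKron A)ᴴ = piKron fun j => (A j)ᴴ := by
  ext u v
  simp [Matrix.conjTranspose_apply]

lemma trace_piKron [DecidableEq σ] [Fintype α] (A : σ → Matrix α α ℂ) :
    (piKron A).trace = ∏ j, (A j).trace := by
  simp only [Matrix.trace, Matrix.diag, piKron_apply]
  exact (Fintype.prod_sum fun j t => A j t t).symm

lemma piKron_one [DecidableEq α] : piKron (fun _ : σ => (1 : Matrix α α ℂ)) = 1 := by
  ext u v
  simp only [piKron_apply, Matrix.one_apply, Finset.prod_boole, Finset.mem_univ, true_implies,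
    funext_iff]

abbrev siteSplit (p : σ → Prop) [DecidablePred p] :
    (σ → α) ≃ ({j // p j} → α) × ({j // ¬p j} → α) :=
  Equiv.piEquivPiSubtypeProd p fun _ => α

lemma piKron_eq_kronecker (p : σ → Prop) [DecidablePred p] (A : σ → Matrix α α ℂ) :
    piKron A = (piKron (fun j : {j // p j} => A j) ⊗ₖ piKron fun j : {j // ¬p j} => A j).submatrix
      (siteSplit p) (siteSplit p) := by
  ext u v
  simp only [Matrix.submatrix_apply, piKron_apply]
  exact (Fintype.prod_subtype_mul_prod_subtype p fun j => A j (u j) (v j)).symm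

end PiKron

lemma sum_pi_prod_prod_eq_prod_sum_sum {σ β γ : Type*} [Fintype σ] [DecidableEq σ] [Fintype β]
    [Fintype γ] (F : σ → β → γ → ℂ) :
    ∑ x : (σ → β) × (σ → γ), ∏ j, F j (x.1 j) (x.2 j) = ∏ j, ∑ b, ∑ c, F j b c :=
  calc ∑ x : (σ → β) × (σ → γ), ∏ j, F j (x.1 j) (x.2 j)
      = ∑ h : σ → β × γ, ∏ j, F j (h j).1 (h j).2 :=
        Fintype.sum_equiv (Equiv.arrowProdEquivProdArrow σ (fun _ => β) fun _ => γ).symm _ _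
          fun _ => rfl
    _ = ∏ j, ∑ bc : β × γ, F j bc.1 bc.2 :=
        (Fintype.prod_sum fun j (bc : β × γ) => F j bc.1 bc.2).symm
    _ = ∏ j, ∑ b, ∑ c, F j b c := by simp only [Fintype.sum_prod_type]

noncomputable def frobeniusSq {ι κ : Type*} [Fintype ι] [Fintype κ] (A : Matrix ι κ ℂ) : ℝ :=
  ∑ i, ∑ j, ‖A i j‖ ^ 2

lemma ofReal_frobeniusSq {ι κ : Type*} [Fintype ι] [Fintype κ] (A : Matrix ι κ ℂ) :
    (frobeniusSq A : ℂ) = (A * Aᴴ).trace := by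
  simp [frobeniusSq, Matrix.trace, Matrix.mul_apply, Complex.mul_conj, Complex.normSq_eq_norm_sq]

lemma norm_sum_mul_sq_le {τ : Type*} (s : Finset τ) (f g : τ → ℂ) :
    ‖∑ j ∈ s, f j * g j‖ ^ 2 ≤ (∑ j ∈ s, ‖f j‖ ^ 2) * ∑ j ∈ s, ‖g j‖ ^ 2 :=
  calc ‖∑ j ∈ s, f j * g j‖ ^ 2 ≤ (∑ j ∈ s, ‖f j‖ * ‖g j‖) ^ 2 := by
        gcongr
        exact (norm_sum_le _ _).trans_eq (by simp only [norm_mul])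
    _ ≤ _ := Finset.sum_mul_sq_le_sq_mul_sq _ _ _

lemma frobeniusSq_submatrix_equiv {ι ι' κ κ' : Type*} [Fintype ι] [Fintype ι'] [Fintype κ]
    [Fintype κ'] (A : Matrix κ κ' ℂ) (e : ι ≃ κ) (e' : ι' ≃ κ') :
    frobeniusSq (A.submatrix e e') = frobeniusSq A :=
  Fintype.sum_equiv e _ _ fun _ => Fintype.sum_equiv e' _ _ fun _ => rfl

lemma trace_submatrix_equiv {ι κ : Type*} [Fintype ι] [Fintype κ] (A : Matrix κ κ ℂ) (e : ι ≃ κ) :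
    (A.submatrix e e).trace = A.trace :=
  Fintype.sum_equiv e _ _ fun _ => rfl

section OneKronecker

variable {ι κ τ : Type*} [Fintype ι] [Fintype κ] [DecidableEq κ] [Fintype τ]

lemma frobeniusSq_one_kronecker (B : Matrix τ τ ℂ) :
    frobeniusSq ((1 : Matrix κ κ ℂ) ⊗ₖ B) = Fintype.card κ * frobeniusSq B := by
  simp [frobeniusSq, Fintype.sum_prod_type, Matrix.one_apply, apply_ite, Finset.mul_sum]

lemma l2OpNorm_submatrix_one_kronecker_sq_le [DecidableEq ι] (e : ι ≃ κ × τ)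
    (B : Matrix τ τ ℂ) :
    l2OpNorm (((1 : Matrix κ κ ℂ) ⊗ₖ B).submatrix e e) ^ 2 ≤ frobeniusSq B := by
  have hF : 0 ≤ frobeniusSq B := by unfold frobeniusSq; positivity
  rw [← Real.le_sqrt (by unfold l2OpNorm; positivity) hF]
  refine ContinuousLinearMap.opNorm_le_bound _ (Real.sqrt_nonneg _) fun ψ => ?_
  refine (sq_le_sq₀ (by positivity) (by positivity)).mp ?_
  set φ : κ → τ → ℂ := fun k j => ψ (e.symm (k, j))
  have hψ : ‖ψ‖ ^ 2 = ∑ k, ∑ j, ‖φ k j‖ ^ 2 := by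
    rw [EuclideanSpace.norm_sq_eq, ← e.symm.sum_comp, Fintype.sum_prod_type]
  have happly : ∀ k i, (LinearMap.toContinuousLinearMap
      (Matrix.toEuclideanLin (((1 : Matrix κ κ ℂ) ⊗ₖ B).submatrix e e))) ψ (e.symm (k, i)) =
      ∑ j, B i j * φ k j := by
    intro k i
    simp [Matrix.mulVec, dotProduct, Fintype.sum_prod_type, Matrix.one_apply, φ]
  calc _ = ∑ k, ∑ i, ‖∑ j, B i j * φ k j‖ ^ 2 := by
        rw [EuclideanSpace.norm_sq_eq, ← e.symm.sum_comp, Fintype.sum_prod_type]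
        simp only [happly]
    _ ≤ ∑ k, ∑ i, (∑ j, ‖B i j‖ ^ 2) * ∑ j, ‖φ k j‖ ^ 2 := by
        gcongr
        exact norm_sum_mul_sq_le _ _ _
    _ = (√(frobeniusSq B) * ‖ψ‖) ^ 2 := by
        rw [mul_pow, Real.sq_sqrt hF, hψ, frobeniusSq, Finset.mul_sum]
        simp only [← Finset.sum_mul]

end OneKronecker

section TrivialOn

variable {σ α : Type*} [Fintype σ] [DecidableEq α] (p : σ → Prop) [DecidablePred p]

def trivialOn : Submodule ℂ (Matrix (σ → α) (σ → α) ℂ) where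
  carrier := {A | ∃ B : Matrix ({j // ¬p j} → α) ({j // ¬p j} → α) ℂ,
    A = ((1 : Matrix ({j // p j} → α) ({j // p j} → α) ℂ) ⊗ₖ B).submatrix
      (siteSplit p) (siteSplit p)}
  add_mem' := by
    rintro _ _ ⟨B, rfl⟩ ⟨C, rfl⟩
    exact ⟨B + C, by ext; simp [mul_add]⟩
  zero_mem' := ⟨0, by ext; simp⟩
  smul_mem' := by
    rintro c _ ⟨B, rfl⟩
    exact ⟨c • B, by ext; simp [mul_left_comm]⟩

variable {p}

lemma l2OpNorm_sq_mul_le_frobeniusSq [DecidableEq σ] [Fintype α]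
    {A : Matrix (σ → α) (σ → α) ℂ} (hA : A ∈ trivialOn p) :
    l2OpNorm A ^ 2 * Fintype.card α ^ Fintype.card {j // p j} ≤ frobeniusSq A := by
  obtain ⟨B, rfl⟩ := hA
  rw [frobeniusSq_submatrix_equiv, frobeniusSq_one_kronecker, Fintype.card_fun, mul_comm]
  push_cast
  gcongr
  exact l2OpNorm_submatrix_one_kronecker_sq_le _ B

end TrivialOn

def pauliXZ (a b : F2) : Matrix (Fin 2) (Fin 2) ℂ := PauliX ^ a.val * PauliZ ^ b.val

lemma F2_eq_zero_or_eq_one (a : F2) : a = 0 ∨ a = 1 := by decide +revert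

lemma sum_F2 {M : Type*} [AddCommMonoid M] (f : F2 → M) : ∑ a : F2, f a = f 0 + f 1 :=
  Fin.sum_univ_two f

lemma pauliXZ_zero_zero : pauliXZ 0 0 = 1 := by simp [pauliXZ]

lemma trace_pauliXZ {a b : F2} (h : ¬(a = 0 ∧ b = 0)) : (pauliXZ a b).trace = 0 := by
  rcases F2_eq_zero_or_eq_one a with rfl | rfl <;> rcases F2_eq_zero_or_eq_one b with rfl | rfl <;>
    simp_all [pauliXZ, PauliX, PauliZ, Matrix.trace_fin_two, ZMod.val_one]

lemma trace_pauliXZ_mul_conjTranspose (a b c d : F2) :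
    (pauliXZ a b * (pauliXZ c d)ᴴ).trace = if a = c ∧ b = d then 2 else 0 := by
  simp only [Matrix.trace_fin_two, Matrix.mul_apply, Fin.sum_univ_two, Matrix.conjTranspose_apply]
  rcases F2_eq_zero_or_eq_one a with rfl | rfl <;> rcases F2_eq_zero_or_eq_one b with rfl | rfl <;>
    rcases F2_eq_zero_or_eq_one c with rfl | rfl <;>
    rcases F2_eq_zero_or_eq_one d with rfl | rfl <;>
    simp [pauliXZ, PauliX, PauliZ, ZMod.val_one] <;> norm_num

lemma sum_pauliXZ_mul_pauliXZ (s t u v : Fin 2) :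
    ∑ a : F2, ∑ b : F2, (-1 : ℂ) ^ (a.val * b.val) * (pauliXZ a b t s * pauliXZ a b u v) =
      if t = v ∧ s = u then 2 else 0 := by
  simp only [sum_F2]
  fin_cases s <;> fin_cases t <;> fin_cases u <;> fin_cases v <;>
    simp [pauliXZ, PauliX, PauliZ, ZMod.val_one] <;> norm_num

section Weyl

variable {n : ℕ}

lemma weyl_eq_smul_piKron (x : PhS n) :
    Weyl x =
      (Complex.I ^ ∑ j, (x.1 j).val * (x.2 j).val) • piKron fun j => pauliXZ (x.1 j) (x.2 j) :=
  rfl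

lemma trace_weyl_mul_conjTranspose (x y : PhS n) :
    (Weyl x * (Weyl y)ᴴ).trace = if x = y then 2 ^ n else 0 := by
  simp only [weyl_eq_smul_piKron, Matrix.conjTranspose_smul, Matrix.smul_mul, Matrix.mul_smul,
    Matrix.trace_smul, conjTranspose_piKron, piKron_mul, trace_piKron, Pi.mul_apply,
    trace_pauliXZ_mul_conjTranspose, Finset.prod_ite_zero, Finset.mem_univ, true_implies]
  by_cases hxy : x = y
  · subst hxy
    simp only [true_and, if_true, Finset.prod_const, Finset.card_univ, Fintype.card_fin,
      smul_eq_mul, star_pow, Complex.star_def, Complex.conj_I]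
    rw [← mul_assoc, ← mul_pow]
    simp
  · have hne : ¬∀ j, x.1 j = y.1 j ∧ x.2 j = y.2 j := fun h =>
      hxy (Prod.ext (funext fun j => (h j).1) (funext fun j => (h j).2))
    simp [hxy, hne]

lemma sum_weyl_apply_mul_weyl_apply (s t u v : QIdx n) :
    ∑ x : PhS n, Weyl x t s * Weyl x u v = if t = v ∧ s = u then 2 ^ n else 0 := by
  have hsite : ∀ x : PhS n, Weyl x t s * Weyl x u v =
      ∏ j, (-1 : ℂ) ^ ((x.1 j).val * (x.2 j).val) *
        (pauliXZ (x.1 j) (x.2 j) (t j) (s j) * pauliXZ (x.1 j) (x.2 j) (u j) (v j)) := by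
    intro x
    -- the two phases combine to `i ^ (2 k) = (-1) ^ k`, which splits over the sites
    rw [Finset.prod_mul_distrib, Finset.prod_pow_eq_pow_sum, Finset.prod_mul_distrib,
      ← Complex.I_sq, ← pow_mul, mul_comm 2, pow_mul, sq]
    simp only [weyl_eq_smul_piKron, Matrix.smul_apply, piKron_apply, smul_eq_mul]
    ring
  simp only [hsite, sum_pi_prod_prod_eq_prod_sum_sum (F := fun j a b =>
    (-1 : ℂ) ^ (a.val * b.val) * (pauliXZ a b (t j) (s j) * pauliXZ a b (u j) (v j))),
    sum_pauliXZ_mul_pauliXZ, Finset.prod_ite_zero, Finset.prod_const, Finset.card_univ,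
    Fintype.card_fin, funext_iff, forall_and, Finset.mem_univ, true_implies]

lemma sum_trace_mul_weyl_smul_weyl (A : Matrix (QIdx n) (QIdx n) ℂ) :
    ∑ x : PhS n, (A * Weyl x).trace • Weyl x = (2 ^ n : ℂ) • A := by
  ext u v
  simp only [Matrix.sum_apply, Matrix.smul_apply, Matrix.trace, Matrix.diag, Matrix.mul_apply,
    smul_eq_mul, Finset.sum_mul, mul_assoc]
  rw [Finset.sum_comm]
  simp only [Finset.sum_comm (γ := PhS n), ← Finset.mul_sum, sum_weyl_apply_mul_weyl_apply]
  simp [mul_comm, ite_and, Finset.sum_ite_eq']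

lemma frobeniusSq_sum_smul_weyl (T : Finset (PhS n)) (c : PhS n → ℂ) :
    frobeniusSq (∑ x ∈ T, c x • Weyl x) = 2 ^ n * ∑ x ∈ T, ‖c x‖ ^ 2 := by
  apply Complex.ofReal_injective
  rw [ofReal_frobeniusSq, Matrix.conjTranspose_sum, Finset.sum_mul_sum]
  simp only [Matrix.conjTranspose_smul, Matrix.smul_mul, Matrix.mul_smul, smul_smul,
    Matrix.trace_sum, Matrix.trace_smul, trace_weyl_mul_conjTranspose, smul_eq_mul, mul_ite,
    mul_zero, Finset.sum_ite_eq]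
  push_cast
  rw [Finset.mul_sum]
  refine Finset.sum_congr rfl fun x hx => ?_
  rw [if_pos hx, Complex.star_def, mul_comm (starRingEnd ℂ _), Complex.mul_conj,
    Complex.normSq_eq_norm_sq]
  push_cast
  ring

lemma frobeniusSq_of_mem_unitaryGroup {U : Matrix (QIdx n) (QIdx n) ℂ}
    (hU : U ∈ Matrix.unitaryGroup (QIdx n) ℂ) : frobeniusSq U = 2 ^ n := by
  apply Complex.ofReal_injective
  rw [ofReal_frobeniusSq, ← Matrix.star_eq_conjTranspose, Matrix.mem_unitaryGroup_iff.mp hU]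
  simp

lemma sum_norm_sq_trace_mul_weyl (A : Matrix (QIdx n) (QIdx n) ℂ) :
    ∑ x, ‖(A * Weyl x).trace‖ ^ 2 = 2 ^ n * frobeniusSq A := by
  have hA : A = ∑ x, ((2 ^ n : ℂ)⁻¹ * (A * Weyl x).trace) • Weyl x := by
    simp only [← smul_smul, ← Finset.smul_sum, sum_trace_mul_weyl_smul_weyl]
    exact (inv_smul_smul₀ (by simp) A).symm
  conv_rhs => rw [hA, frobeniusSq_sum_smul_weyl]
  simp only [norm_mul, mul_pow, ← Finset.mul_sum, ← mul_assoc, norm_inv, norm_pow,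
    Complex.norm_ofNat]
  field_simp

lemma pauliProj_sub_self (S : Set (PhS n)) (A : Matrix (QIdx n) (QIdx n) ℂ) :
    pauliProj S A - A = ∑ x ∈ S.toFinsetᶜ, (-(2 ^ n : ℂ)⁻¹ * (A * Weyl x).trace) • Weyl x := by
  have hA : (2 ^ n : ℂ)⁻¹ • (∑ x ∈ S.toFinset, (A * Weyl x).trace • Weyl x +
      ∑ x ∈ S.toFinsetᶜ, (A * Weyl x).trace • Weyl x) = A := by
    rw [Finset.sum_add_sum_compl, sum_trace_mul_weyl_smul_weyl, inv_smul_smul₀ (by simp)]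
  rw [pauliProj, finsum_mem_eq_toFinset_sum]
  conv_lhs => arg 2; rw [← hA]
  rw [smul_add, sub_add_cancel_left, Finset.smul_sum, ← Finset.sum_neg_distrib]
  simp only [smul_smul, neg_mul, neg_smul]

lemma frobeniusSq_pauliProj_sub_self (S : Set (PhS n)) (A : Matrix (QIdx n) (QIdx n) ℂ) :
    frobeniusSq (pauliProj S A - A) = (2 ^ n)⁻¹ * ∑ x ∈ S.toFinsetᶜ, ‖(A * Weyl x).trace‖ ^ 2 := by
  rw [pauliProj_sub_self, frobeniusSq_sum_smul_weyl]
  simp only [norm_mul, norm_neg, norm_inv, norm_pow, Complex.norm_ofNat, mul_pow, ← Finset.mul_sum]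
  field_simp

lemma frobeniusSq_pauliProj_sub_self_of_mem_unitaryGroup {U : Matrix (QIdx n) (QIdx n) ℂ}
    (hU : U ∈ Matrix.unitaryGroup (QIdx n) ℂ) (S : Set (PhS n)) :
    frobeniusSq (pauliProj S U - U) = 2 ^ n - (2 ^ n)⁻¹ * ∑ᶠ x ∈ S, ‖(Weyl x * U).trace‖ ^ 2 := by
  have htotal := sum_norm_sq_trace_mul_weyl U
  rw [frobeniusSq_of_mem_unitaryGroup hU, ← Finset.sum_compl_add_sum S.toFinset] at htotal
  rw [frobeniusSq_pauliProj_sub_self, finsum_mem_eq_toFinset_sum, eq_sub_of_add_eq htotal]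
  simp only [Matrix.trace_mul_comm (Weyl _) U]
  field_simp

variable {p : Fin n → Prop} [DecidablePred p]

lemma weyl_mem_trivialOn {x : PhS n} (hx : ∀ j, p j → x.1 j = 0 ∧ x.2 j = 0) :
    Weyl x ∈ trivialOn p := by
  have hidle : piKron (fun j : {j // p j} => pauliXZ (x.1 j) (x.2 j)) = 1 := by
    rw [← piKron_one]
    congr 1
    funext j
    rw [(hx j j.2).1, (hx j j.2).2, pauliXZ_zero_zero]
  rw [weyl_eq_smul_piKron]
  refine Submodule.smul_mem _ _ ⟨piKron fun j : {j // ¬p j} => pauliXZ (x.1 j) (x.2 j), ?_⟩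
  rw [piKron_eq_kronecker p, hidle]

lemma trace_mul_weyl_eq_zero {A : Matrix (QIdx n) (QIdx n) ℂ} (hA : A ∈ trivialOn p) {x : PhS n}
    {j : Fin n} (hj : p j) (hx : ¬(x.1 j = 0 ∧ x.2 j = 0)) : (A * Weyl x).trace = 0 := by
  obtain ⟨B, rfl⟩ := hA
  rw [weyl_eq_smul_piKron, piKron_eq_kronecker p, Matrix.mul_smul, Matrix.trace_smul,
    Matrix.submatrix_mul_equiv, trace_submatrix_equiv, ← Matrix.mul_kronecker_mul, one_mul,
    Matrix.trace_kronecker, trace_piKron, Finset.prod_eq_zero (Finset.mem_univ ⟨j, hj⟩)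
    (trace_pauliXZ hx), zero_mul, smul_zero]

lemma pauliProj_mem_trivialOn {A : Matrix (QIdx n) (QIdx n) ℂ} (hA : A ∈ trivialOn p)
    (S : Set (PhS n)) : pauliProj S A ∈ trivialOn p := by
  rw [pauliProj, finsum_mem_eq_toFinset_sum]
  refine Submodule.smul_mem _ _ (Submodule.sum_mem _ fun x _ => ?_)
  by_cases hx : ∀ j, p j → x.1 j = 0 ∧ x.2 j = 0
  · exact Submodule.smul_mem _ _ (weyl_mem_trivialOn hx)
  · obtain ⟨j, hj, hxj⟩ := not_forall₂.mp hx
    rw [trace_mul_weyl_eq_zero hA hj hxj, zero_smul]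
    exact Submodule.zero_mem _

lemma IsBlockDiag.mem_trivialOn {a b : ℕ} {hab : a + b ≤ n} {A : Matrix (QIdx n) (QIdx n) ℂ}
    (hA : IsBlockDiag a b hab A) : A ∈ trivialOn fun j : Fin n => (j : ℕ) < n - a - b := by
  obtain ⟨M, hM⟩ := hA
  refine ⟨Matrix.of fun s t =>
    if ∀ j : {j : Fin n // ¬(j : ℕ) < n - a - b}, (j : ℕ) < n - a → s j = t j then
    M (fun i => s ⟨⟨n - a - b + i.1, by omega⟩, by simp⟩)
      (fun i => s ⟨⟨n - a + i.1, by omega⟩, by simp; omega⟩)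
      (fun i => t ⟨⟨n - a + i.1, by omega⟩, by simp; omega⟩) else 0, ?_⟩
  ext u v
  have hsplit : (∀ j : Fin n, (j : ℕ) < n - a → u j = v j) ↔
      (fun j : {j : Fin n // (j : ℕ) < n - a - b} => u j) =
          (fun j : {j : Fin n // (j : ℕ) < n - a - b} => v j) ∧
        ∀ j : {j : Fin n // ¬(j : ℕ) < n - a - b}, (j : ℕ) < n - a → u j = v j := by
    refine ⟨fun h => ⟨funext fun j => h j (by have := j.2; omega), fun j => h j⟩,
      fun ⟨hhead, htail⟩ j hj => ?_⟩
    by_cases hjm : (j : ℕ) < n - a - b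
    · exact congrFun hhead ⟨j, hjm⟩
    · exact htail ⟨j, hjm⟩ hj
  rw [Matrix.submatrix_apply, Matrix.kroneckerMap_apply]
  simp only [hM, hsplit, ite_and, Equiv.piEquivPiSubtypeProd_apply, Matrix.one_apply,
    Matrix.of_apply]
  split_ifs <;> simp_all

lemma card_subtype_val_lt {m : ℕ} (hm : m ≤ n) : Fintype.card {j : Fin n // (j : ℕ) < m} = m := by
  rw [Fintype.card_subtype, Fin.card_filter_val_lt, min_eq_right hm]

end Weyl

theorem stmt14_general (a b a' b' n : ℕ) (hab : a + b ≤ n)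
    (ε : ℝ) (hε : 0 < ε)
    (U : Matrix (QIdx n) (QIdx n) ℂ) (hU : U ∈ Matrix.unitaryGroup (QIdx n) ℂ)
    (hbd : IsBlockDiag a b hab U)
    (hweight : 1 - ε ^ 2 / 2 ^ (a + b) ≤
      (4 ^ n : ℝ)⁻¹ * ∑ᶠ x ∈ (Wab n a' b' : Set (PhS n)), ‖(Weyl x * U).trace‖ ^ 2) :
    l2OpNorm (pauliProj (Wab n a' b' : Set (PhS n)) U - U) ≤ ε := by
  have hD : pauliProj (Wab n a' b' : Set (PhS n)) U - U ∈
      trivialOn fun j : Fin n => (j : ℕ) < n - a - b :=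
    sub_mem (pauliProj_mem_trivialOn hbd.mem_trivialOn _) hbd.mem_trivialOn
  have hnorm := l2OpNorm_sq_mul_le_frobeniusSq hD
  rw [frobeniusSq_pauliProj_sub_self_of_mem_unitaryGroup hU, Fintype.card_fin,
    card_subtype_val_lt (by omega), Nat.cast_ofNat] at hnorm
  set X := (2 ^ n : ℝ)⁻¹ * ∑ᶠ x ∈ (Wab n a' b' : Set (PhS n)), ‖(Weyl x * U).trace‖ ^ 2
  have h2n : (2 : ℝ) ^ n = 2 ^ (n - a - b) * 2 ^ (a + b) := by
    rw [← pow_add, Nat.sub_sub, Nat.sub_add_cancel hab]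
  have h4n : (4 : ℝ) ^ n = 2 ^ n * 2 ^ n := by rw [← mul_pow]; norm_num
  rw [h4n, mul_inv, mul_assoc] at hweight
  have hX : 2 ^ n - 2 ^ (n - a - b) * ε ^ 2 ≤ X :=
    calc 2 ^ n - 2 ^ (n - a - b) * ε ^ 2 = 2 ^ n * (1 - ε ^ 2 / 2 ^ (a + b)) := by
          rw [h2n]
          field_simp
      _ ≤ 2 ^ n * ((2 ^ n)⁻¹ * X) := by gcongr
      _ = X := by field_simp
  have hsq : l2OpNorm (pauliProj (Wab n a' b' : Set (PhS n)) U - U) ^ 2 ≤ ε ^ 2 :=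
    le_of_mul_le_mul_right (by linarith) (by positivity : (0 : ℝ) < 2 ^ (n - a - b))
  exact (sq_le_sq₀ (by unfold l2OpNorm; positivity) hε.le).mp hsq

theorem stmt14 (a b a' b' n : ℕ) (hab : a + b ≤ n) (hab' : a' + b' ≤ a + b)
    (ε : ℝ) (hε : 0 < ε)
    (U : Matrix (QIdx n) (QIdx n) ℂ) (hU : U ∈ Matrix.unitaryGroup (QIdx n) ℂ)
    (hbd : IsBlockDiag a b hab U)
    (hsupp : (Wab n a' b' : Set (PhS n)) ⊆ pauliSupport U)
    (hweight : 1 - ε ^ 2 / 2 ^ (a + b) ≤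
      (4 ^ n : ℝ)⁻¹ * ∑ᶠ x ∈ (Wab n a' b' : Set (PhS n)), ‖(Weyl x * U).trace‖ ^ 2) :
    l2OpNorm (pauliProj (Wab n a' b' : Set (PhS n)) U - U) ≤ ε :=
  stmt14_general a b a' b' n hab ε hε U hU hbd hweight

end PauliSpec
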